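/- arXiv:1603.05548 — 2 statements merged into one kernel-verified Lean document; each statement's English description precedes it below -/
import Mathlib

section
/- Let f : X → Y be a homeomorphism between metric spaces and assume Y is geodesic. Then for every p ∈ X and every r > 0 such that the set {q ∈ X : d(p,q) ≥ r} is nonempty, the sphere {q ∈ X : d(p,q) = r} is nonempty and inf{d(f(p),f(q)) : d(p,q) ≥ r} = inf{d(f(p),f(q)) : d(p,q) = r}. -/
/-! Pull a geodesic from `f p` to `f q` back along `f`: the resulting path from `p` to `q`
meets the sphere `S(p, r)` by the intermediate value theorem, and along a geodesic the
distance to `f p` never exceeds `d(f p, f q)`. So every `q` with `r ≤ d(p, q)` can be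
replaced by a point of the sphere without increasing `d(f p, f q)`. -/

open Metric Filter Topology ENNReal

/-- A metric space is geodesic if any two points are joined by a continuous path along
which the triangle inequality is an equality. -/
def IsGeodesicSpace (Y : Type*) [MetricSpace Y] : Prop :=
  ∀ y y' : Y, ∃ γ : ℝ → Y, ContinuousOn γ (Set.Icc 0 1) ∧ γ 0 = y ∧ γ 1 = y' ∧
    ∀ t ∈ Set.Icc (0 : ℝ) 1, dist y (γ t) + dist (γ t) y' = dist y y'

theorem biInf_eq_of_subset_of_forall_exists_le {α β : Type*} [CompleteLattice β]
    {s t : Set α} (g : α → β) (hst : s ⊆ t) (h : ∀ x ∈ t, ∃ y ∈ s, g y ≤ g x) :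
    ⨅ x ∈ t, g x = ⨅ x ∈ s, g x :=
  le_antisymm (biInf_mono hst) <| iInf₂_mono' fun x hx =>
    let ⟨y, hy, hle⟩ := h x hx
    ⟨y, hy, hle⟩

theorem exists_mem_sphere_of_continuousOn {X : Type*} [PseudoMetricSpace X] {γ : ℝ → X}
    (hγ : ContinuousOn γ (Set.Icc 0 1)) {p : X} {r : ℝ}
    (hr : r ∈ Set.Icc (dist (γ 0) p) (dist (γ 1) p)) :
    ∃ t ∈ Set.Icc (0 : ℝ) 1, γ t ∈ sphere p r :=
  intermediate_value_Icc zero_le_one (by fun_prop) hr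

theorem IsGeodesicSpace.exists_path_dist_le {Y : Type*} [MetricSpace Y]
    (hY : IsGeodesicSpace Y) (y y' : Y) :
    ∃ γ : ℝ → Y, ContinuousOn γ (Set.Icc 0 1) ∧ γ 0 = y ∧ γ 1 = y' ∧
      ∀ t ∈ Set.Icc (0 : ℝ) 1, dist y (γ t) ≤ dist y y' := by
  obtain ⟨γ, hγ, hγ0, hγ1, hγd⟩ := hY y y'
  refine ⟨γ, hγ, hγ0, hγ1, fun t ht => ?_⟩
  linarith [hγd t ht, dist_nonneg (x := γ t) (y := y')]

theorem Homeomorph.exists_mem_sphere_edist_le {X Y : Type*} [MetricSpace X] [MetricSpace Y]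
    (f : X ≃ₜ Y) (hY : IsGeodesicSpace Y) {p q : X} {r : ℝ} (hr : 0 ≤ r)
    (hq : r ≤ dist p q) :
    ∃ q' ∈ sphere p r, edist (f p) (f q') ≤ edist (f p) (f q) := by
  obtain ⟨γ, hγ, hγ0, hγ1, hγd⟩ := hY.exists_path_dist_le (f p) (f q)
  have hpath : ContinuousOn (f.symm ∘ γ) (Set.Icc 0 1) :=
    f.symm.continuous.comp_continuousOn hγ
  have hr' : r ∈ Set.Icc (dist ((f.symm ∘ γ) 0) p) (dist ((f.symm ∘ γ) 1) p) := by
    simp only [Function.comp_apply, hγ0, hγ1, Homeomorph.symm_apply_apply, dist_self,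
      dist_comm q p]
    exact ⟨hr, hq⟩
  obtain ⟨t, ht, hsphere⟩ := exists_mem_sphere_of_continuousOn hpath hr'
  refine ⟨_, hsphere, ?_⟩
  simpa only [Function.comp_apply, Homeomorph.apply_symm_apply, edist_dist]
    using ENNReal.ofReal_le_ofReal (hγd t ht)

/-- The claim at the start of the proof of Corollary 3.7: for a homeomorphism `f : X → Y`
with `Y` geodesic, if `{q : d(p,q) ≥ r}` is nonempty then the sphere `{q : d(p,q) = r}` is
nonempty and `inf {d(f p, f q) : d(p,q) ≥ r} = inf {d(f p, f q) : d(p,q) = r}`. -/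
theorem sphere_nonempty_and_inf_eq {X Y : Type*} [MetricSpace X] [MetricSpace Y]
    (f : X ≃ₜ Y) (hY : IsGeodesicSpace Y) (p : X) (r : ℝ) (hr : 0 < r)
    (hne : {q : X | r ≤ dist p q}.Nonempty) :
    (Metric.sphere p r).Nonempty ∧
      (⨅ q ∈ {q : X | r ≤ dist p q}, edist (f p) (f q)) =
        ⨅ q ∈ Metric.sphere p r, edist (f p) (f q) := by
  have push := fun q (hq : r ≤ dist p q) => f.exists_mem_sphere_edist_le hY hr.le hq
  obtain ⟨q₀, hq₀⟩ := hne
  obtain ⟨q₁, hq₁, -⟩ := push q₀ hq₀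
  have hsub : sphere p r ⊆ {q | r ≤ dist p q} := fun q hq =>
    (dist_comm p q ▸ mem_sphere.mp hq).ge
  exact ⟨⟨q₁, hq₁⟩, biInf_eq_of_subset_of_forall_exists_le _ hsub push⟩
end

section
/- Let X be a proper metric space (closed bounded sets are compact), Y a metric space, f : X → Y a continuous map, and p ∈ X. Then, with sup ∅ = 0 and values in [0,∞], liminf_{r→0⁺} ( sup{d(f(p),f(q)) : d(p,q) ≤ r} / r ) ≤ limsup_{r→0⁺} ( sup{d(f(p),f(q)) : d(p,q) = r} / r ). -/
open Metric Filter Topology ENNReal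

/-! A radius `r` at which the ball ratio is large can always be traded for a radius `s ≤ r` at
which the sphere ratio is at least as large: take `s = d(p, q₀)` for a point `q₀` where
`d(f p, f ·)` attains its maximum on the compact ball `B̄(p, r)`. Hence even the `limsup` of the
ball ratios is bounded by the `limsup` of the sphere ratios. -/

theorem Filter.limsup_nhdsGT_le_of_forall_exists_Ioc {α β : Type*} [LinearOrder α]
    [TopologicalSpace α] [OrderTopology α] [NoMaxOrder α] [CompleteLattice β] {u v : α → β}
    {a : α} (h : ∀ r, a < r → ∃ s ∈ Set.Ioc a r, u r ≤ v s) :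
    limsup u (𝓝[>] a) ≤ limsup v (𝓝[>] a) := by
  rw [(nhdsGT_basis a).limsup_eq_iInf_iSup, (nhdsGT_basis a).limsup_eq_iInf_iSup]
  refine iInf₂_mono fun ε _ => iSup₂_le fun r hr => ?_
  obtain ⟨s, hs, hus⟩ := h r hr.1
  exact le_iSup₂_of_le s ⟨hs.1, hs.2.trans_lt hr.2⟩ hus

theorem Metric.exists_iSup_closedBall_eq {X β : Type*} [PseudoMetricSpace X] [ProperSpace X]
    [CompleteLinearOrder β] [TopologicalSpace β] [OrderTopology β] {g : X → β}
    (hg : Continuous g) (p : X) {r : ℝ} (hr : 0 ≤ r) :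
    ∃ q ∈ closedBall p r, ⨆ x ∈ closedBall p r, g x = g q := by
  simpa only [sSup_image] using
    (isCompact_closedBall p r).exists_sSup_image_eq ⟨p, mem_closedBall_self hr⟩ hg.continuousOn

theorem Metric.exists_iSup_closedBall_div_le_iSup_sphere_div {X : Type*} [MetricSpace X]
    [ProperSpace X] {g : X → ℝ≥0∞} (hg : Continuous g) {p : X} (hgp : g p = 0) {r : ℝ}
    (hr : 0 < r) :
    ∃ s ∈ Set.Ioc 0 r, (⨆ x ∈ closedBall p r, g x) / ENNReal.ofReal r ≤
      (⨆ x ∈ sphere p s, g x) / ENNReal.ofReal s := by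
  obtain ⟨q, hq, hmax⟩ := exists_iSup_closedBall_eq hg p hr.le
  by_cases hgq : g q = 0
  · exact ⟨r, ⟨hr, le_rfl⟩, by rw [hmax, hgq, ENNReal.zero_div]; exact zero_le⟩
  have hqp : q ≠ p := fun h => hgq (h ▸ hgp)
  refine ⟨dist q p, ⟨dist_pos.2 hqp, hq⟩, ?_⟩
  rw [hmax]
  exact ENNReal.div_le_div (le_iSup₂_of_le q (mem_sphere.2 rfl) le_rfl)
    (ENNReal.ofReal_le_ofReal hq)

/-- The inequality `underline-L_f(p) ≤ overline-L^=_f(p)` from the proof of Lemma 3.5: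
for a continuous map `f` on a proper metric space `X`,
`liminf_{r→0⁺} sup{d(f p, f q) : d(p,q) ≤ r}/r ≤ limsup_{r→0⁺} sup{d(f p, f q) : d(p,q) = r}/r`
(in `[0,∞]`, with `sup ∅ = 0`). -/
theorem liminf_ball_le_limsup_sphere {X Y : Type*} [MetricSpace X] [ProperSpace X]
    [MetricSpace Y] (f : X → Y) (hf : Continuous f) (p : X) :
    Filter.liminf (fun r : ℝ =>
        (⨆ q ∈ Metric.closedBall p r, edist (f p) (f q)) / ENNReal.ofReal r)
        (𝓝[>] (0 : ℝ)) ≤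
      Filter.limsup (fun r : ℝ =>
        (⨆ q ∈ Metric.sphere p r, edist (f p) (f q)) / ENNReal.ofReal r)
        (𝓝[>] (0 : ℝ)) :=
  (liminf_le_limsup (f := 𝓝[>] (0 : ℝ))).trans <|
    limsup_nhdsGT_le_of_forall_exists_Ioc fun _ hr =>
      exists_iSup_closedBall_div_le_iSup_sphere_div (continuous_const.edist hf) (edist_self _) hr
end
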